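/- arXiv:1304.5798 — 4 statements merged into one kernel-verified Lean document; each statement's English description precedes it below -/
import Mathlib

section
/- For every n ≥ 1 and all u, v ∈ S_n, we have D(id, v) + D(v, u) = D(id, u) if and only if min(i, u(i)) ≤ v(i) ≤ max(i, u(i)) for all i = 1, 2, …, n. In other words, v lies in the segment [id, u] exactly when every value v(i) lies between i and u(i). -/
/-- Membership in `S_n`, realized as permutations of `ℕ` fixing every point
outside `{1, …, n}`. -/
def InSymm (n : ℕ) (π : Equiv.Perm ℕ) : Prop :=
  ∀ i : ℕ, i ∉ Finset.Icc 1 n → π i = i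

/-- The ℓ¹-distance `D(u,v) = ∑_{i=1}^n |u(i) − v(i)|` on `S_n`. -/
def permDist (n : ℕ) (u v : Equiv.Perm ℕ) : ℤ :=
  ∑ i ∈ Finset.Icc 1 n, |(u i : ℤ) - (v i : ℤ)|

/-! Each summand of `D(id, v) + D(v, u)` dominates the corresponding summand of `D(id, u)` by the
triangle inequality, so the sums agree exactly when every summand does, and
`|a - b| + |b - c| = |a - c|` holds exactly when `b` lies between `a` and `c`. -/

open Finset

theorem abs_sub_add_abs_sub_eq_iff {G : Type*} [AddCommGroup G] [LinearOrder G]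
    [IsOrderedAddMonoid G] (a b c : G) :
    |a - b| + |b - c| = |a - c| ↔ b ∈ Set.uIcc a c := by
  rw [← sub_add_sub_cancel a b c, eq_comm, abs_add_eq_add_abs_iff, Set.mem_uIcc]
  simp only [sub_nonneg, sub_nonpos]
  exact or_comm.trans (or_congr_right and_comm)

theorem permDist_add_permDist_eq_iff (n : ℕ) (w u v : Equiv.Perm ℕ) :
    permDist n w v + permDist n v u = permDist n w u ↔
      ∀ i ∈ Icc 1 n, v i ∈ Set.uIcc (w i) (u i) := by
  unfold permDist
  rw [← sum_add_distrib, eq_comm,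
    sum_eq_sum_iff_of_le fun i _ ↦ abs_sub_le (w i : ℤ) (v i) (u i)]
  simp only [eq_comm (a := |(w _ : ℤ) - u _|), abs_sub_add_abs_sub_eq_iff, Set.mem_uIcc,
    Nat.cast_le]

theorem mem_segment_iff_general (n : ℕ) (u v : Equiv.Perm ℕ) :
    permDist n 1 v + permDist n v u = permDist n 1 u ↔
      ∀ i, 1 ≤ i → i ≤ n → min i (u i) ≤ v i ∧ v i ≤ max i (u i) := by
  simp only [permDist_add_permDist_eq_iff, mem_Icc, and_imp, Set.uIcc, Set.mem_Icc,
    Equiv.Perm.one_apply]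

/-- `v ∈ [id, u]` iff `min(i, u(i)) ≤ v(i) ≤ max(i, u(i))` for all
`i = 1, …, n`. -/
theorem mem_segment_iff (n : ℕ) (hn : 1 ≤ n) (u v : Equiv.Perm ℕ)
    (hu : InSymm n u) (hv : InSymm n v) :
    permDist n 1 v + permDist n v u = permDist n 1 u ↔
      ∀ i, 1 ≤ i → i ≤ n → min i (u i) ≤ v i ∧ v i ≤ max i (u i) :=
  mem_segment_iff_general n u v
end

section
/- Let m ≥ 1. The map η: S_{2m} → S_{2m+2} sending u to the permutation with one-line notation (u(1)+1, 1, u(2)+1, u(3)+1, …, u(2m−1)+1, 2m+2, u(2m)+1) is injective, and its image consists exactly of the permutations σ ∈ S_{2m+2} with σ(2) = 1 and σ(2m+1) = 2m+2. -/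
open Equiv

theorem InSymm.apply_mem_Icc {n : ℕ} {π : Perm ℕ} (hπ : InSymm n π) {i : ℕ}
    (hi : i ∈ Finset.Icc 1 n) : π i ∈ Finset.Icc 1 n := by
  by_contra h
  rw [π.injective (hπ _ h)] at h
  exact h hi

@[simps]
def cycleFrom (a k : ℕ) : Perm ℕ where
  toFun x := if a ≤ x ∧ x < a + k then x + 1 else if x = a + k then a else x
  invFun y := if a < y ∧ y ≤ a + k then y - 1 else if y = a then a + k else y
  left_inv x := by dsimp only; split_ifs <;> omega
  right_inv y := by dsimp only; split_ifs <;> omega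

/-- `τ = η(u)`, read off the one-line notation of `τ`. -/
def IsEta (m : ℕ) (u τ : Perm ℕ) : Prop :=
  InSymm (2 * m + 2) τ ∧ τ 1 = u 1 + 1 ∧ τ 2 = 1 ∧
    (∀ i, 3 ≤ i → i ≤ 2 * m → τ i = u (i - 1) + 1) ∧
    τ (2 * m + 1) = 2 * m + 2 ∧ τ (2 * m + 2) = u (2 * m) + 1

/-- Sends each position of `u` to the position of `η(u)` where its (shifted) value is written. -/
def etaPos (m : ℕ) : Perm ℕ :=
  swap (2 * m + 1) (2 * m + 2) * cycleFrom 2 (2 * m - 1)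

theorem apply_etaPos_of_notMem {m i : ℕ} {σ : Perm ℕ} (hσ : InSymm (2 * m + 2) σ) (h2 : σ 2 = 1)
    (hlast : σ (2 * m + 1) = 2 * m + 2) (hi : i ∉ Finset.Icc 1 (2 * m)) :
    σ (etaPos m i) = cycleFrom 1 (2 * m) i := by
  rw [Finset.mem_Icc] at hi
  simp only [etaPos, Perm.mul_apply, cycleFrom_apply, swap_apply_def]
  obtain rfl | hi1 := eq_or_ne i (2 * m + 1)
  · convert h2 using 2 <;> split_ifs <;> omega
  obtain rfl | hi2 := eq_or_ne i (2 * m + 2)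
  · convert hlast using 2 <;> split_ifs <;> omega
  · convert hσ i (by simp only [Finset.mem_Icc]; omega) using 2 <;> split_ifs <;> omega

theorem IsEta.eq_mul_mul_etaPos_inv {m : ℕ} {u τ : Perm ℕ} (hu : InSymm (2 * m) u)
    (hτ : IsEta m u τ) : τ = cycleFrom 1 (2 * m) * u * (etaPos m)⁻¹ := by
  obtain ⟨hτ, h1, h2, hmid, hlast, hend⟩ := hτ
  rw [eq_mul_inv_iff_mul_eq]
  ext j
  rw [Perm.mul_apply, Perm.mul_apply]
  by_cases hj : j ∈ Finset.Icc 1 (2 * m)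
  · have huj := Finset.mem_Icc.1 (hu.apply_mem_Icc hj)
    rw [Finset.mem_Icc] at hj
    simp only [etaPos, Perm.mul_apply, cycleFrom_apply, swap_apply_def]
    rw [if_pos (by omega : 1 ≤ u j ∧ u j < 1 + 2 * m)]
    obtain rfl | hj1 := eq_or_ne j 1
    · convert h1 using 2; split_ifs <;> omega
    obtain rfl | hjm := eq_or_ne j (2 * m)
    · convert hend using 2; split_ifs <;> omega
    · convert hmid (j + 1) (by omega) (by omega) using 2
      · split_ifs <;> omega
      · simp
  · rw [hu j hj, apply_etaPos_of_notMem hτ h2 hlast hj]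

theorem inSymm_cycleFrom_inv_mul_mul_etaPos {m : ℕ} {σ : Perm ℕ} (hσ : InSymm (2 * m + 2) σ)
    (h2 : σ 2 = 1) (hlast : σ (2 * m + 1) = 2 * m + 2) :
    InSymm (2 * m) ((cycleFrom 1 (2 * m))⁻¹ * σ * etaPos m) := fun i hi ↦ by
  rw [Perm.mul_apply, Perm.mul_apply, apply_etaPos_of_notMem hσ h2 hlast hi, Perm.inv_def,
    symm_apply_apply]

theorem eta_injective_image_general (m : ℕ) (E : Equiv.Perm ℕ → Equiv.Perm ℕ)
    -- `E u = η(u)` for every `u ∈ S_{2m}`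
    (hE : ∀ u : Equiv.Perm ℕ, InSymm (2 * m) u →
      InSymm (2 * m + 2) (E u) ∧
      E u 1 = u 1 + 1 ∧
      E u 2 = 1 ∧
      (∀ i, 3 ≤ i → i ≤ 2 * m → E u i = u (i - 1) + 1) ∧
      E u (2 * m + 1) = 2 * m + 2 ∧
      E u (2 * m + 2) = u (2 * m) + 1) :
    Set.InjOn E {u : Equiv.Perm ℕ | InSymm (2 * m) u} ∧
      E '' {u : Equiv.Perm ℕ | InSymm (2 * m) u} =
        {σ : Equiv.Perm ℕ | InSymm (2 * m + 2) σ ∧ σ 2 = 1 ∧ σ (2 * m + 1) = 2 * m + 2} := by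
  have hEq : Set.EqOn E (fun u ↦ cycleFrom 1 (2 * m) * u * (etaPos m)⁻¹)
      {u | InSymm (2 * m) u} := fun u hu ↦ IsEta.eq_mul_mul_etaPos_inv hu (hE u hu)
  refine ⟨hEq.injOn_iff.2 fun u _ v _ huv ↦ by simpa using huv, ?_⟩
  refine subset_antisymm ?_ fun σ ⟨hσ, h2, hlast⟩ ↦ ?_
  · rintro _ ⟨u, hu, rfl⟩
    obtain ⟨hτ, -, h2, -, hlast, -⟩ := hE u hu
    exact ⟨hτ, h2, hlast⟩
  · have hu := inSymm_cycleFrom_inv_mul_mul_etaPos hσ h2 hlast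
    refine ⟨_, hu, ?_⟩
    rw [hEq hu]
    group

/-- the map `η : S_{2m} → S_{2m+2}` is injective, with image
exactly the `σ ∈ S_{2m+2}` with `σ(2) = 1` and `σ(2m+1) = 2m+2`. -/
theorem eta_injective_image (m : ℕ) (hm : 1 ≤ m) (E : Equiv.Perm ℕ → Equiv.Perm ℕ)
    -- `E u = η(u)` for every `u ∈ S_{2m}`
    (hE : ∀ u : Equiv.Perm ℕ, InSymm (2 * m) u →
      InSymm (2 * m + 2) (E u) ∧
      E u 1 = u 1 + 1 ∧
      E u 2 = 1 ∧
      (∀ i, 3 ≤ i → i ≤ 2 * m → E u i = u (i - 1) + 1) ∧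
      E u (2 * m + 1) = 2 * m + 2 ∧
      E u (2 * m + 2) = u (2 * m) + 1) :
    Set.InjOn E {u : Equiv.Perm ℕ | InSymm (2 * m) u} ∧
      E '' {u : Equiv.Perm ℕ | InSymm (2 * m) u} =
        {σ : Equiv.Perm ℕ | InSymm (2 * m + 2) σ ∧ σ 2 = 1 ∧ σ (2 * m + 1) = 2 * m + 2} :=
  eta_injective_image_general m E hE
end

section
/- Let m ≥ 1 and 1 ≤ i ≤ m. For every permutation u ∈ S_{2m+1}, one has g(u)(2i) = α(u⁻¹(i)), and the inequality g(u)(2i) ≤ 2i holds if and only if u⁻¹(i) ∈ [1, i] ∪ [m+2, m+i+1]. -/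
/-!
Since `β i = 2 i`, the factor `β⁻¹` sends position `2 i` to `i`, so `g(u)(2 i) = α(u⁻¹ i)`.
On `[1, m+1]` the map `α` is `k ↦ 2k - 1` and on `[m+2, 2m+1]` it is `k ↦ 2(k - m - 1)`, both
increasing, so `α k ≤ 2 i` cuts out the initial segments `[1, i]` and `[m+2, m+i+1]` of the two
blocks.
-/

open Finset Equiv

theorem InSymm.inv_apply_mem_Icc {n : ℕ} {π : Perm ℕ} (hπ : InSymm n π) {i : ℕ}
    (hi : i ∈ Icc 1 n) : π⁻¹ i ∈ Icc 1 n := by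
  by_contra h
  have hfix : i = π⁻¹ i := by simpa using hπ _ h
  exact h (hfix ▸ hi)

theorem apply_le_two_mul_iff_of_odd_then_even {m i k : ℕ} {α : Perm ℕ}
    (hα1 : ∀ j, 1 ≤ j → j ≤ m + 1 → α j = 2 * j - 1)
    (hα2 : ∀ j, m + 2 ≤ j → j ≤ 2 * m + 1 → α j = 2 * j - 2 * m - 2)
    (hk : k ∈ Icc 1 (2 * m + 1)) :
    α k ≤ 2 * i ↔ k ∈ Icc 1 i ∪ Icc (m + 2) (m + i + 1) := by
  simp only [mem_union, mem_Icc] at hk ⊢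
  rcases le_or_gt k (m + 1) with hle | hgt
  · rw [hα1 k hk.1 hle]; omega
  · rw [hα2 k hgt hk.2]; omega

theorem g_even_positions_general (m : ℕ) (i : ℕ) (hi1 : 1 ≤ i) (hi2 : i ≤ m)
    (α β : Equiv.Perm ℕ)
    -- `α` has one-line notation `(1, 3, …, 2m+1, 2, 4, …, 2m)`
    (hα1 : ∀ j, 1 ≤ j → j ≤ m + 1 → α j = 2 * j - 1)
    (hα2 : ∀ j, m + 2 ≤ j → j ≤ 2 * m + 1 → α j = 2 * j - 2 * m - 2)
    -- `β` has one-line notation `(2, 4, …, 2m, 2m+1, 1, 3, …, 2m−1)`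
    (hβ1 : ∀ j, 1 ≤ j → j ≤ m → β j = 2 * j)
    (u : Equiv.Perm ℕ) (hu : InSymm (2 * m + 1) u) (gu : Equiv.Perm ℕ)
    -- `gu = g(u) = ρ(α u⁻¹ β⁻¹)`
    (hg1 : ∀ i, 1 ≤ i → i ≤ 2 * m → gu i = (α * u⁻¹ * β⁻¹) i)
    :
    gu (2 * i) = α (u⁻¹ i) ∧
      (gu (2 * i) ≤ 2 * i ↔
        u⁻¹ i ∈ Finset.Icc 1 i ∪ Finset.Icc (m + 2) (m + i + 1)) := by
  have hβinv : β⁻¹ (2 * i) = i := Perm.inv_eq_iff_eq.mpr (hβ1 i hi1 hi2).symm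
  have hgu : gu (2 * i) = α (u⁻¹ i) := by
    rw [hg1 (2 * i) (by omega) (by omega), Perm.mul_apply, Perm.mul_apply, hβinv]
  have hui : u⁻¹ i ∈ Icc 1 (2 * m + 1) := hu.inv_apply_mem_Icc (mem_Icc.mpr ⟨hi1, by omega⟩)
  exact ⟨hgu, hgu ▸ apply_le_two_mul_iff_of_odd_then_even hα1 hα2 hui⟩

/-- `g(u)(2i) = α(u⁻¹(i))`, and `g(u)(2i) ≤ 2i` iff
`u⁻¹(i) ∈ [1, i] ∪ [m+2, m+i+1]`. -/
theorem g_even_positions (m : ℕ) (hm : 1 ≤ m) (i : ℕ) (hi1 : 1 ≤ i) (hi2 : i ≤ m)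
    (α β : Equiv.Perm ℕ)
    -- `α` has one-line notation `(1, 3, …, 2m+1, 2, 4, …, 2m)`
    (hα0 : InSymm (2 * m + 1) α)
    (hα1 : ∀ j, 1 ≤ j → j ≤ m + 1 → α j = 2 * j - 1)
    (hα2 : ∀ j, m + 2 ≤ j → j ≤ 2 * m + 1 → α j = 2 * j - 2 * m - 2)
    -- `β` has one-line notation `(2, 4, …, 2m, 2m+1, 1, 3, …, 2m−1)`
    (hβ0 : InSymm (2 * m + 1) β)
    (hβ1 : ∀ j, 1 ≤ j → j ≤ m → β j = 2 * j)
    (hβ2 : β (m + 1) = 2 * m + 1)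
    (hβ3 : ∀ j, m + 2 ≤ j → j ≤ 2 * m + 1 → β j = 2 * j - 2 * m - 3)
    (u : Equiv.Perm ℕ) (hu : InSymm (2 * m + 1) u) (gu : Equiv.Perm ℕ)
    -- `gu = g(u) = ρ(α u⁻¹ β⁻¹)`
    (hg0 : InSymm (2 * m + 2) gu)
    (hg1 : ∀ i, 1 ≤ i → i ≤ 2 * m → gu i = (α * u⁻¹ * β⁻¹) i)
    (hg2 : gu (2 * m + 1) = 2 * m + 2)
    (hg3 : gu (2 * m + 2) = (α * u⁻¹ * β⁻¹) (2 * m + 1))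
    :
    gu (2 * i) = α (u⁻¹ i) ∧
      (gu (2 * i) ≤ 2 * i ↔
        u⁻¹ i ∈ Finset.Icc 1 i ∪ Finset.Icc (m + 2) (m + i + 1)) :=
  g_even_positions_general m i hi1 hi2 α β hα1 hα2 hβ1 u hu gu hg1
end

section
/- Let m ≥ 2 and 2 ≤ i ≤ m. For every permutation u ∈ S_{2m}, one has h(u)(2i) = α(u⁻¹(i−1)) + 1, and the strict inequality h(u)(2i) < 2i holds if and only if u⁻¹(i−1) ∈ [1, i−1] ∪ [m+1, m+i−1]. -/
theorem InSymm.inv_apply_mem_Icc_s16 {n : ℕ} {π : Equiv.Perm ℕ} (hπ : InSymm n π) {j : ℕ}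
    (hj : j ∈ Finset.Icc 1 n) : π⁻¹ j ∈ Finset.Icc 1 n := by
  by_contra h
  apply h
  rwa [← hπ _ h, Equiv.Perm.coe_inv, Equiv.apply_symm_apply]

theorem add_one_lt_two_mul_iff_of_perfect_shuffle {m i : ℕ} {α : Equiv.Perm ℕ}
    (hα1 : ∀ j, 1 ≤ j → j ≤ m → α j = 2 * j - 1)
    (hα2 : ∀ j, m + 1 ≤ j → j ≤ 2 * m → α j = 2 * j - 2 * m) (hi : i ≤ m) {k : ℕ}
    (hk : k ∈ Finset.Icc 1 (2 * m)) :
    α k + 1 < 2 * i ↔ k ∈ Finset.Icc 1 (i - 1) ∪ Finset.Icc (m + 1) (m + i - 1) := by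
  simp only [Finset.mem_union, Finset.mem_Icc] at hk ⊢
  rcases le_or_gt k m with hkm | hkm
  · have := hα1 k hk.1 hkm
    omega
  · have := hα2 k hkm hk.2
    omega

theorem h_even_positions_general (m : ℕ) (i : ℕ) (hi1 : 2 ≤ i) (hi2 : i ≤ m)
    (α β : Equiv.Perm ℕ)
    -- `α` has one-line notation `(1, 3, …, 2m−1, 2, 4, …, 2m)`
    (hα1 : ∀ j, 1 ≤ j → j ≤ m → α j = 2 * j - 1)
    (hα2 : ∀ j, m + 1 ≤ j → j ≤ 2 * m → α j = 2 * j - 2 * m)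
    -- `β` has one-line notation `(3, 5, …, 2m−1, 1, 2m, 2, 4, …, 2m−2)`
    (hβ1 : ∀ j, 1 ≤ j → j ≤ m - 1 → β j = 2 * j + 1)
    (u : Equiv.Perm ℕ) (hu : InSymm (2 * m) u) (hp : Equiv.Perm ℕ)
    -- `hp = h(u) = η(α u⁻¹ β⁻¹)`
    (hh3 : ∀ i, 3 ≤ i → i ≤ 2 * m → hp i = (α * u⁻¹ * β⁻¹) (i - 1) + 1)
    :
    hp (2 * i) = α (u⁻¹ (i - 1)) + 1 ∧
      (hp (2 * i) < 2 * i ↔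
        u⁻¹ (i - 1) ∈ Finset.Icc 1 (i - 1) ∪ Finset.Icc (m + 1) (m + i - 1)) := by
  have hβ : β⁻¹ (2 * i - 1) = i - 1 :=
    Equiv.Perm.inv_eq_iff_eq.2 (by rw [hβ1 (i - 1) (by omega) (by omega)]; omega)
  have hval : hp (2 * i) = α (u⁻¹ (i - 1)) + 1 := by
    rw [hh3 (2 * i) (by omega) (by omega), Equiv.Perm.mul_apply, Equiv.Perm.mul_apply, hβ]
  refine ⟨hval, ?_⟩
  rw [hval]
  exact add_one_lt_two_mul_iff_of_perfect_shuffle hα1 hα2 hi2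
    (hu.inv_apply_mem_Icc_s16 (by simp only [Finset.mem_Icc]; omega))

/-- for `2 ≤ i ≤ m`, `h(u)(2i) = α(u⁻¹(i−1)) + 1`, and
`h(u)(2i) < 2i` iff `u⁻¹(i−1) ∈ [1, i−1] ∪ [m+1, m+i−1]`. -/
theorem h_even_positions (m : ℕ) (hm : 2 ≤ m) (i : ℕ) (hi1 : 2 ≤ i) (hi2 : i ≤ m)
    (α β : Equiv.Perm ℕ)
    -- `α` has one-line notation `(1, 3, …, 2m−1, 2, 4, …, 2m)`
    (hα0 : InSymm (2 * m) α)
    (hα1 : ∀ j, 1 ≤ j → j ≤ m → α j = 2 * j - 1)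
    (hα2 : ∀ j, m + 1 ≤ j → j ≤ 2 * m → α j = 2 * j - 2 * m)
    -- `β` has one-line notation `(3, 5, …, 2m−1, 1, 2m, 2, 4, …, 2m−2)`
    (hβ0 : InSymm (2 * m) β)
    (hβ1 : ∀ j, 1 ≤ j → j ≤ m - 1 → β j = 2 * j + 1)
    (hβ2 : β m = 1)
    (hβ3 : β (m + 1) = 2 * m)
    (hβ4 : ∀ j, m + 2 ≤ j → j ≤ 2 * m → β j = 2 * j - 2 * m - 2)
    (u : Equiv.Perm ℕ) (hu : InSymm (2 * m) u) (hp : Equiv.Perm ℕ)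
    -- `hp = h(u) = η(α u⁻¹ β⁻¹)`
    (hh0 : InSymm (2 * m + 2) hp)
    (hh1 : hp 1 = (α * u⁻¹ * β⁻¹) 1 + 1)
    (hh2 : hp 2 = 1)
    (hh3 : ∀ i, 3 ≤ i → i ≤ 2 * m → hp i = (α * u⁻¹ * β⁻¹) (i - 1) + 1)
    (hh4 : hp (2 * m + 1) = 2 * m + 2)
    (hh5 : hp (2 * m + 2) = (α * u⁻¹ * β⁻¹) (2 * m) + 1)
    :
    hp (2 * i) = α (u⁻¹ (i - 1)) + 1 ∧
      (hp (2 * i) < 2 * i ↔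
        u⁻¹ (i - 1) ∈ Finset.Icc 1 (i - 1) ∪ Finset.Icc (m + 1) (m + i - 1)) :=
  h_even_positions_general m i hi1 hi2 α β hα1 hα2 hβ1 u hu hp hh3
end
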